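/- A CNF formula F over variables V is unsatisfiable if and only if the empty clause belongs to the resolution closure of F. -/
import Mathlib


/-- A literal is a variable together with a polarity (`true` = positive). -/
abbrev Lit (V : Type) := V × Bool

/-- A clause is a finite set of literals. -/
abbrev Clause (V : Type) := Finset (Lit V)

/-- An assignment satisfies a clause if some literal evaluates to true. -/
def SatC {V : Type} (A : V → Bool) (C : Clause V) : Prop := ∃ l ∈ C, A l.1 = l.2

/-- An assignment satisfies a CNF formula (finite set of clauses) if it satisfies every clause. -/
def SatF {V : Type} (A : V → Bool) (F : Finset (Clause V)) : Prop := ∀ C ∈ F, SatC A C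


/-- The resolution closure of `F`: the smallest set of clauses containing `F`
and closed under single resolution steps. -/
inductive InClosure {V : Type} [DecidableEq V] (F : Finset (Clause V)) : Clause V → Prop
  | base (C : Clause V) : C ∈ F → InClosure F C
  | res (D₁ D₂ : Clause V) (x : V) :
      InClosure F (insert (x, true) D₁) → InClosure F (insert (x, false) D₂) →
      InClosure F (D₁ ∪ D₂)

/-- Soundness: any clause in the closure is satisfied by any model of `F`. -/
lemma resolution_sound {V : Type} [DecidableEq V] {F : Finset (Clause V)} {A : V → Bool}
    (hA : SatF A F) : ∀ {C : Clause V}, InClosure F C → SatC A C := by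
  intro C h
  induction h with
  | base C hC => exact hA C hC
  | res D₁ D₂ x h1 h2 ih1 ih2 =>
    cases hx : A x with
    | true =>
      obtain ⟨l, hl, hlv⟩ := ih2
      rcases Finset.mem_insert.1 hl with rfl | hl
      · simp [hx] at hlv
      · exact ⟨l, Finset.mem_union_right _ hl, hlv⟩
    | false =>
      obtain ⟨l, hl, hlv⟩ := ih1
      rcases Finset.mem_insert.1 hl with rfl | hl
      · simp [hx] at hlv
      · exact ⟨l, Finset.mem_union_left _ hl, hlv⟩

/-- Lifting lemma: a resolution derivation from `F` with `x := b` substituted lifts to a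
derivation from `F` of either the same clause or the clause with `(x, !b)` added. -/
lemma resolution_lift {V : Type} [DecidableEq V] (F : Finset (Clause V)) (x : V) (b : Bool) :
    ∀ D : Clause V,
      InClosure ((F.filter (fun C => (x, b) ∉ C)).image (fun C => C.erase (x, !b))) D →
      InClosure F D ∨ InClosure F (insert (x, !b) D) := by
  intro D h
  induction h with
  | base C hC =>
    obtain ⟨C', hC', rfl⟩ := Finset.mem_image.1 hC
    have hC'F : C' ∈ F := (Finset.mem_filter.1 hC').1
    by_cases hx : (x, !b) ∈ C'
    · right
      rw [Finset.insert_erase hx]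
      exact .base _ hC'F
    · left
      rw [Finset.erase_eq_of_notMem hx]
      exact .base _ hC'F
  | res D₁ D₂ y h1 h2 ih1 ih2 =>
    rcases ih1 with ih1 | ih1 <;> rcases ih2 with ih2 | ih2
    · exact .inl (.res _ _ y ih1 ih2)
    · right
      have h2' : InClosure F (insert (y, false) (insert (x, !b) D₂)) := by
        rwa [Finset.insert_comm]
      have := InClosure.res D₁ (insert (x, !b) D₂) y ih1 h2'
      rwa [Finset.union_insert] at this
    · right
      have h1' : InClosure F (insert (y, true) (insert (x, !b) D₁)) := by
        rwa [Finset.insert_comm]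
      have := InClosure.res (insert (x, !b) D₁) D₂ y h1' ih2
      rwa [Finset.insert_union] at this
    · right
      have h1' : InClosure F (insert (y, true) (insert (x, !b) D₁)) := by
        rwa [Finset.insert_comm]
      have h2' : InClosure F (insert (y, false) (insert (x, !b) D₂)) := by
        rwa [Finset.insert_comm]
      have := InClosure.res (insert (x, !b) D₁) (insert (x, !b) D₂) y h1' h2'
      rwa [Finset.insert_union, Finset.union_insert, Finset.insert_idem] at this

/-- Completeness: if the empty clause is not derivable then `F` is satisfiable
(proved by induction on the number of variables). -/
lemma resolution_complete {V : Type} [DecidableEq V] :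
    ∀ (n : ℕ) (S : Finset V) (F : Finset (Clause V)), S.card ≤ n →
      (∀ C ∈ F, ∀ l ∈ C, l.1 ∈ S) → ¬ InClosure F (∅ : Clause V) →
      ∃ A : V → Bool, SatF A F := by
  intro n
  induction n with
  | zero =>
    intro S F hcard hvars hne
    have hS : S = ∅ := Finset.card_eq_zero.1 (Nat.le_zero.1 hcard)
    subst hS
    refine ⟨fun _ => true, fun C hC => ?_⟩
    have hCe : C = ∅ := by
      by_contra h
      obtain ⟨l, hl⟩ := Finset.nonempty_iff_ne_empty.2 h
      exact absurd (hvars C hC l hl) (Finset.notMem_empty _)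
    subst hCe
    exact absurd (.base _ hC) hne
  | succ n ih =>
    intro S F hcard hvars hne
    rcases S.eq_empty_or_nonempty with rfl | ⟨x, hx⟩
    · exact ih ∅ F (by simp) hvars hne
    · set G : Bool → Finset (Clause V) :=
        fun b => (F.filter (fun C => (x, b) ∉ C)).image (fun C => C.erase (x, !b)) with hGdef
      have hGvars : ∀ b, ∀ C ∈ G b, ∀ l ∈ C, l.1 ∈ S.erase x := by
        intro b C hC l hl
        obtain ⟨C', hC', rfl⟩ := Finset.mem_image.1 hC
        obtain ⟨hC'F, hxb⟩ := Finset.mem_filter.1 hC'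
        have hlC' : l ∈ C' := Finset.mem_of_mem_erase hl
        have hne' : l ≠ (x, !b) := Finset.ne_of_mem_erase hl
        refine Finset.mem_erase.2 ⟨?_, hvars C' hC'F l hlC'⟩
        intro hlx
        rcases l with ⟨v, c⟩
        simp only at hlx
        subst hlx
        cases b <;> cases c <;> simp_all
      have hb : ∃ b, ¬ InClosure (G b) (∅ : Clause V) := by
        by_contra h
        push_neg at h
        have h1 := resolution_lift F x true _ (h true)
        have h2 := resolution_lift F x false _ (h false)
        rcases h1 with h1 | h1
        · exact hne h1
        rcases h2 with h2 | h2
        · exact hne h2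
        have : InClosure F ((∅ : Clause V) ∪ ∅) :=
          .res ∅ ∅ x (by simpa using h2) (by simpa using h1)
        exact hne (by simpa using this)
      obtain ⟨b, hb⟩ := hb
      obtain ⟨A, hA⟩ := ih (S.erase x) (G b)
        (by have := Finset.card_erase_of_mem hx
            have := Finset.card_pos.2 ⟨x, hx⟩
            omega)
        (hGvars b) hb
      refine ⟨Function.update A x b, fun C hC => ?_⟩
      by_cases hxb : (x, b) ∈ C
      · exact ⟨(x, b), hxb, by simp⟩
      · have hCG : C.erase (x, !b) ∈ G b :=
          Finset.mem_image_of_mem _ (Finset.mem_filter.2 ⟨hC, hxb⟩)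
        obtain ⟨l, hl, hlv⟩ := hA _ hCG
        have hlC : l ∈ C := Finset.mem_of_mem_erase hl
        have hne' : l ≠ (x, !b) := Finset.ne_of_mem_erase hl
        have hlx : l.1 ≠ x := by
          rcases l with ⟨v, c⟩
          intro hvx
          simp only at hvx
          subst hvx
          cases b <;> cases c <;>
            simp only [Bool.not_true, Bool.not_false] at hne' <;>
            first
              | exact hxb hlC
              | exact hne' rfl
        exact ⟨l, hlC, by rwa [Function.update_of_ne hlx]⟩

/-- `F` is unsatisfiable iff the empty clause belongs to its resolution closure. -/
theorem unsat_iff_empty_in_closure {V : Type} [DecidableEq V] [Fintype V]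
    (F : Finset (Clause V)) :
    (¬ ∃ A : V → Bool, SatF A F) ↔ InClosure F (∅ : Clause V) := by
  constructor
  · intro h
    by_contra hne
    exact h (resolution_complete (Finset.univ : Finset V).card Finset.univ F le_rfl
      (fun _ _ l _ => Finset.mem_univ l.1) hne)
  · rintro h ⟨A, hA⟩
    obtain ⟨l, hl, -⟩ := resolution_sound hA h
    exact Finset.notMem_empty _ hl
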